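/- arXiv:1812.03769 — 2 statements merged into one kernel-verified Lean document; each statement's English description precedes it below -/
import Mathlib

section
/- Let the sequences {w^k} and {w̃^k} be generated by GS-ADMM. Then for every k, w̃^k ∈ M and, for all w = (x,y,λ) ∈ M, h(u) − h(ũ^k) + ⟨w − w̃^k, J(w̃^k) + Q(w̃^k − w^k)⟩ ≥ 0, where Q is the linear map whose value at δw = (δx_1,…,δx_p, δy_1,…,δy_q, δλ) has i-th x-component β[(σ_1+1)A_iᵀA_i δx_i − A_iᵀ(Σ_{l=1}^p A_l δx_l)] for i = 1,…,p, j-th y-component (σ_2+1)β B_jᵀB_j δy_j − τ B_jᵀ δλ for j = 1,…,q, and λ-component −Σ_{j=1}^q B_j δy_j + (1/β)δλ. -/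
/-!
Each block update minimises, over a convex set, a convex function plus a quadratic: the augmented
Lagrangian restricted to that block together with the proximal term. Comparing the minimiser `xs`
with the points `xs + t • (z - xs)`, `t ∈ (0, 1)`, and letting `t → 0⁺` gives the first-order
variational inequality, whose linear part is the directional derivative of the quadratic. Written
in terms of `λ̃ᵏ = λᵏ - β (A xᵏ⁺¹ + B yᵏ - c)` (and `λᵏ⁺¹ᐟ² = λᵏ + τ (λ̃ᵏ - λᵏ)`) these are exactly
the `x`- and `y`-rows of `J(w̃ᵏ) + Q(w̃ᵏ - wᵏ)`, while its `λ`-row vanishes identically. Summing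
the block inequalities gives the claim.
-/

open scoped RealInnerProductSpace
open Matrix Filter

/-- Multiplication of a matrix with a vector, viewed as a map between Euclidean spaces. -/
noncomputable def mv {n m : ℕ} (M : Matrix (Fin n) (Fin m) ℝ)
    (v : EuclideanSpace ℝ (Fin m)) : EuclideanSpace ℝ (Fin n) :=
  WithLp.toLp 2 (M.mulVec v)

/-- `sA A x = Σ_i A_i x_i`. -/
noncomputable def sA {p n : ℕ} {m : Fin p → ℕ}
    (A : ∀ i, Matrix (Fin n) (Fin (m i)) ℝ)
    (x : ∀ i, EuclideanSpace ℝ (Fin (m i))) : EuclideanSpace ℝ (Fin n) :=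
  ∑ i, mv (A i) (x i)

/-- The augmented Lagrangian
`L_β(x,y,λ) = Σ_i f_i(x_i) + Σ_j g_j(y_j) − ⟨λ, Ax + By − c⟩ + (β/2)‖Ax + By − c‖²`. -/
noncomputable def Lag {p q n : ℕ} {m : Fin p → ℕ} {d : Fin q → ℕ}
    (A : ∀ i, Matrix (Fin n) (Fin (m i)) ℝ)
    (B : ∀ j, Matrix (Fin n) (Fin (d j)) ℝ)
    (c : EuclideanSpace ℝ (Fin n))
    (f : ∀ i, EuclideanSpace ℝ (Fin (m i)) → ℝ)
    (g : ∀ j, EuclideanSpace ℝ (Fin (d j)) → ℝ)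
    (β : ℝ)
    (x : ∀ i, EuclideanSpace ℝ (Fin (m i)))
    (y : ∀ j, EuclideanSpace ℝ (Fin (d j)))
    (lam : EuclideanSpace ℝ (Fin n)) : ℝ :=
  (∑ i, f i (x i)) + (∑ j, g j (y j)) - ⟪lam, sA A x + sA B y - c⟫
    + β / 2 * ‖sA A x + sA B y - c‖ ^ 2

section InnerProductSpace

variable {E F : Type*} [AddCommGroup E] [Module ℝ E] [NormedAddCommGroup F] [InnerProductSpace ℝ F]

theorem ConvexOn.sub_add_lineDeriv_nonneg_of_isMinOn {X : Set E} {Φ φ : E → ℝ}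
    (hΦ : ConvexOn ℝ X Φ) {xs z : E} (hxs : xs ∈ X) (hz : z ∈ X) (hmin : IsMinOn (Φ + φ) X xs)
    {a : ℝ} (hφ : HasLineDerivAt ℝ φ a xs (z - xs)) :
    0 ≤ Φ z - Φ xs + a := by
  have hslope : ∀ t ∈ Set.Ioo (0 : ℝ) 1, Φ xs - Φ z ≤ t⁻¹ • (φ (xs + t • (z - xs)) - φ xs) := by
    rintro t ⟨ht0, ht1⟩
    have hseg : xs + t • (z - xs) = (1 - t) • xs + t • z := by module
    have hconv : Φ (xs + t • (z - xs)) ≤ (1 - t) * Φ xs + t * Φ z := by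
      rw [hseg]
      exact hΦ.2 hxs hz (by linarith) ht0.le (by ring)
    have hle : Φ xs + φ xs ≤ Φ (xs + t • (z - xs)) + φ (xs + t • (z - xs)) :=
      hmin (hseg ▸ hΦ.1 hxs hz (by linarith) ht0.le (by ring))
    rw [smul_eq_mul, le_inv_mul_iff₀ ht0]
    nlinarith
  have hlim := ge_of_tendsto hφ.tendsto_slope_zero_right
    (eventually_of_mem (Ioo_mem_nhdsGT one_pos) hslope)
  linarith

theorem hasDerivAt_linearMap_add_smul_add (L : E →ₗ[ℝ] F) (x v : E) (r : F) :
    HasDerivAt (fun t : ℝ => L (x + t • v) + r) (L v) 0 := by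
  simp only [map_add, map_smul]
  simpa using (((hasDerivAt_id (0 : ℝ)).smul_const (L v)).const_add (L x)).add_const r

theorem hasLineDerivAt_augmented_quadratic (L : E →ₗ[ℝ] F) (lam r z₀ : F) (β γ : ℝ) (x v : E) :
    HasLineDerivAt ℝ
      (fun z => -⟪lam, L z + r⟫ + β / 2 * ‖L z + r‖ ^ 2 + γ / 2 * ‖L z - z₀‖ ^ 2)
      ⟪L v, -lam + β • (L x + r) + γ • (L x - z₀)⟫ x v := by
  have hr := hasDerivAt_linearMap_add_smul_add L x v r
  have hz₀ := hasDerivAt_linearMap_add_smul_add L x v (-z₀)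
  simp only [← sub_eq_add_neg] at hz₀
  have := (((hasDerivAt_const (0 : ℝ) lam).inner ℝ hr).neg.add
    (hr.norm_sq.const_mul (β / 2))).add (hz₀.norm_sq.const_mul (γ / 2))
  refine this.congr_deriv ?_
  simp only [zero_smul, add_zero, inner_zero_left, inner_add_right, inner_neg_right,
    real_inner_smul_right, real_inner_comm (L v)]
  ring

end InnerProductSpace

theorem mv_eq_toLpLin {n m : ℕ} (M : Matrix (Fin n) (Fin m) ℝ) (v : EuclideanSpace ℝ (Fin m)) :
    mv M v = Matrix.toLpLin 2 2 M v := rfl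

theorem inner_mv_transpose {n m : ℕ} (M : Matrix (Fin n) (Fin m) ℝ) (v : EuclideanSpace ℝ (Fin m))
    (w : EuclideanSpace ℝ (Fin n)) : ⟪v, mv Mᵀ w⟫ = ⟪mv M v, w⟫ := by
  simp only [mv, EuclideanSpace.inner_eq_star_dotProduct, star_trivial, Matrix.mulVec_transpose,
    Matrix.dotProduct_mulVec, dotProduct_comm]

theorem Finset.sum_apply_update {ι : Type*} [Fintype ι] [DecidableEq ι] {α : ι → Type*}
    {M : Type*} [AddCommGroup M] (F : ∀ l, α l → M) (x : ∀ l, α l) (i : ι) (z : α i) :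
    ∑ l, F l (Function.update x i z l) = ∑ l, F l (x l) - F i (x i) + F i z := by
  simp only [Function.apply_update F x i z, Finset.sum_update_of_mem (Finset.mem_univ i),
    Finset.sum_eq_sum_sdiff_singleton_add (Finset.mem_univ i) (fun l => F l (x l))]
  abel

section GSADMM

variable {p q n : ℕ} {m : Fin p → ℕ} {d : Fin q → ℕ}
  (A : ∀ i, Matrix (Fin n) (Fin (m i)) ℝ) (B : ∀ j, Matrix (Fin n) (Fin (d j)) ℝ)
  (c : EuclideanSpace ℝ (Fin n))
  (f : ∀ i, EuclideanSpace ℝ (Fin (m i)) → ℝ) (g : ∀ j, EuclideanSpace ℝ (Fin (d j)) → ℝ)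
  (β : ℝ)

theorem sA_sub (x x' : ∀ i, EuclideanSpace ℝ (Fin (m i))) :
    sA A (fun i => x i - x' i) = sA A x - sA A x' := by
  simp only [sA, mv_eq_toLpLin, map_sub, Finset.sum_sub_distrib]

theorem sA_update (x : ∀ i, EuclideanSpace ℝ (Fin (m i))) (i : Fin p)
    (z : EuclideanSpace ℝ (Fin (m i))) :
    sA A (Function.update x i z) = sA A x - mv (A i) (x i) + mv (A i) z :=
  Finset.sum_apply_update (fun l => mv (A l)) x i z

theorem Lag_comm (x : ∀ i, EuclideanSpace ℝ (Fin (m i))) (y : ∀ j, EuclideanSpace ℝ (Fin (d j)))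
    (lam : EuclideanSpace ℝ (Fin n)) :
    Lag A B c f g β x y lam = Lag B A c g f β y x lam := by
  simp only [Lag, add_comm (sA A x), add_comm (∑ i, f i (x i))]

theorem Lag_update (x : ∀ i, EuclideanSpace ℝ (Fin (m i))) (y : ∀ j, EuclideanSpace ℝ (Fin (d j)))
    (lam : EuclideanSpace ℝ (Fin n)) (i : Fin p) (z : EuclideanSpace ℝ (Fin (m i))) :
    Lag A B c f g β (Function.update x i z) y lam
      = f i z + (∑ l, f l (x l) - f i (x i) + ∑ j, g j (y j))
        + (-⟪lam, mv (A i) z + (sA A x - mv (A i) (x i) + sA B y - c)⟫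
          + β / 2 * ‖mv (A i) z + (sA A x - mv (A i) (x i) + sA B y - c)‖ ^ 2) := by
  have hres : sA A (Function.update x i z) + sA B y - c
      = mv (A i) z + (sA A x - mv (A i) (x i) + sA B y - c) := by
    rw [sA_update]; abel
  rw [Lag, hres, Finset.sum_apply_update f]
  ring

theorem Lag_update_variational_ineq (x : ∀ i, EuclideanSpace ℝ (Fin (m i)))
    (y : ∀ j, EuclideanSpace ℝ (Fin (d j))) (lam : EuclideanSpace ℝ (Fin n)) (γ : ℝ) (i : Fin p)
    {X : Set (EuclideanSpace ℝ (Fin (m i)))} (hf : ConvexOn ℝ X (f i))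
    {xs : EuclideanSpace ℝ (Fin (m i))} (hxs : xs ∈ X)
    (hmin : ∀ z ∈ X, Lag A B c f g β (Function.update x i xs) y lam
        + γ / 2 * ‖mv (A i) (xs - x i)‖ ^ 2
      ≤ Lag A B c f g β (Function.update x i z) y lam + γ / 2 * ‖mv (A i) (z - x i)‖ ^ 2)
    {z : EuclideanSpace ℝ (Fin (m i))} (hz : z ∈ X) :
    0 ≤ f i z - f i xs + ⟪mv (A i) (z - xs),
      -lam + β • (sA A x + sA B y - c + mv (A i) (xs - x i)) + γ • mv (A i) (xs - x i)⟫ := by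
  -- `L` is opaque, so `simp` uses its linearity without unfolding `toLpLin`
  obtain ⟨L, hL⟩ : ∃ L : _ →ₗ[ℝ] _, ∀ v, mv (A i) v = L v := ⟨_, mv_eq_toLpLin (A i)⟩
  have hblock : IsMinOn (fun z => f i z + (-⟪lam, L z + (sA A x - L (x i) + sA B y - c)⟫
      + β / 2 * ‖L z + (sA A x - L (x i) + sA B y - c)‖ ^ 2 + γ / 2 * ‖L z - L (x i)‖ ^ 2))
      X xs := by
    refine isMinOn_iff.mpr fun z hz => ?_
    have h := hmin z hz
    simp only [Lag_update, hL, map_sub] at h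
    linarith
  have h := hf.sub_add_lineDeriv_nonneg_of_isMinOn hxs hz hblock
    (hasLineDerivAt_augmented_quadratic L lam _ (L (x i)) β γ xs (z - xs))
  simp only [hL, map_sub]
  rw [map_sub] at h
  rwa [show sA A x + sA B y - c + (L xs - L (x i)) = L xs + (sA A x - L (x i) + sA B y - c) by abel]

theorem gsadmm_x_update_variational_ineq (x₀ x₁ : ∀ i, EuclideanSpace ℝ (Fin (m i)))
    (y₀ : ∀ j, EuclideanSpace ℝ (Fin (d j))) (lam₀ : EuclideanSpace ℝ (Fin n)) (σ1 : ℝ) (i : Fin p)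
    {X : Set (EuclideanSpace ℝ (Fin (m i)))} (hf : ConvexOn ℝ X (f i)) (hx₁ : x₁ i ∈ X)
    (hmin : ∀ z ∈ X, Lag A B c f g β (Function.update x₀ i (x₁ i)) y₀ lam₀
        + σ1 * β / 2 * ‖mv (A i) (x₁ i - x₀ i)‖ ^ 2
      ≤ Lag A B c f g β (Function.update x₀ i z) y₀ lam₀ + σ1 * β / 2 * ‖mv (A i) (z - x₀ i)‖ ^ 2)
    {z : EuclideanSpace ℝ (Fin (m i))} (hz : z ∈ X) :
    0 ≤ f i z - f i (x₁ i) + ⟪z - x₁ i,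
      -(mv (A i)ᵀ (lam₀ - β • (sA A x₁ + sA B y₀ - c)))
        + β • ((σ1 + 1) • mv (A i)ᵀ (mv (A i) (x₁ i - x₀ i))
          - mv (A i)ᵀ (sA A (fun l => x₁ l - x₀ l)))⟫ := by
  have h := Lag_update_variational_ineq A B c f g β x₀ y₀ lam₀ (σ1 * β) i hf hx₁ hmin hz
  rw [← inner_mv_transpose] at h
  convert h using 3
  simp only [sA_sub, mv_eq_toLpLin, map_add, map_sub, map_neg, map_smul]
  module

theorem gsadmm_y_update_variational_ineq (x₁ : ∀ i, EuclideanSpace ℝ (Fin (m i)))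
    (y₀ y₁ : ∀ j, EuclideanSpace ℝ (Fin (d j))) (lam₀ lamh : EuclideanSpace ℝ (Fin n))
    (σ2 τ : ℝ) (hlamh : lamh = lam₀ - (τ * β) • (sA A x₁ + sA B y₀ - c)) (j : Fin q)
    {Y : Set (EuclideanSpace ℝ (Fin (d j)))} (hg : ConvexOn ℝ Y (g j)) (hy₁ : y₁ j ∈ Y)
    (hmin : ∀ z ∈ Y, Lag A B c f g β x₁ (Function.update y₀ j (y₁ j)) lamh
        + σ2 * β / 2 * ‖mv (B j) (y₁ j - y₀ j)‖ ^ 2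
      ≤ Lag A B c f g β x₁ (Function.update y₀ j z) lamh + σ2 * β / 2 * ‖mv (B j) (z - y₀ j)‖ ^ 2)
    {z : EuclideanSpace ℝ (Fin (d j))} (hz : z ∈ Y) :
    0 ≤ g j z - g j (y₁ j) + ⟪z - y₁ j,
      -(mv (B j)ᵀ (lam₀ - β • (sA A x₁ + sA B y₀ - c)))
        + (((σ2 + 1) * β) • mv (B j)ᵀ (mv (B j) (y₁ j - y₀ j))
          - τ • mv (B j)ᵀ ((lam₀ - β • (sA A x₁ + sA B y₀ - c)) - lam₀))⟫ := by
  -- the `y`-update is an `x`-update of the problem with the two groups swapped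
  simp only [Lag_comm A B c f g β] at hmin
  have h := Lag_update_variational_ineq B A c g f β y₀ x₁ lamh (σ2 * β) j hg hy₁ hmin hz
  rw [← inner_mv_transpose] at h
  convert h using 3
  simp only [hlamh, mv_eq_toLpLin, map_add, map_sub, map_neg, map_smul]
  module

theorem gsadmm_multiplier_residual_eq_zero (hβ : β ≠ 0) (x₁ : ∀ i, EuclideanSpace ℝ (Fin (m i)))
    (y₀ y₁ : ∀ j, EuclideanSpace ℝ (Fin (d j))) (lam₀ : EuclideanSpace ℝ (Fin n)) :
    (sA A x₁ + sA B y₁ - c) + (-(sA B (fun j => y₁ j - y₀ j))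
      + β⁻¹ • ((lam₀ - β • (sA A x₁ + sA B y₀ - c)) - lam₀)) = 0 := by
  rw [sA_sub, sub_sub_cancel_left, smul_neg, smul_smul, inv_mul_cancel₀ hβ, one_smul]
  abel

end GSADMM

theorem stmt3_general
    {p q n : ℕ}
    {m : Fin p → ℕ} {d : Fin q → ℕ}
    (A : ∀ i, Matrix (Fin n) (Fin (m i)) ℝ)
    (B : ∀ j, Matrix (Fin n) (Fin (d j)) ℝ)
    (c : EuclideanSpace ℝ (Fin n))
    (X : ∀ i, Set (EuclideanSpace ℝ (Fin (m i))))
    (Y : ∀ j, Set (EuclideanSpace ℝ (Fin (d j))))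
    (hXcv : ∀ i, Convex ℝ (X i))
    (hYcv : ∀ j, Convex ℝ (Y j))
    (f : ∀ i, EuclideanSpace ℝ (Fin (m i)) → ℝ)
    (g : ∀ j, EuclideanSpace ℝ (Fin (d j)) → ℝ)
    (hf : ∀ i, ConvexOn ℝ Set.univ (f i))
    (hg : ∀ j, ConvexOn ℝ Set.univ (g j))
    (β σ1 σ2 τ : ℝ) (hβ : 0 < β)
    (x : ℕ → ∀ i, EuclideanSpace ℝ (Fin (m i)))
    (y : ℕ → ∀ j, EuclideanSpace ℝ (Fin (d j)))
    (lam lamh : ℕ → EuclideanSpace ℝ (Fin n))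
    (hxmin : ∀ k i, x (k+1) i ∈ X i ∧ ∀ z ∈ X i,
      Lag A B c f g β (Function.update (x k) i (x (k+1) i)) (y k) (lam k)
          + σ1 * β / 2 * ‖mv (A i) (x (k+1) i - x k i)‖ ^ 2
        ≤ Lag A B c f g β (Function.update (x k) i z) (y k) (lam k)
          + σ1 * β / 2 * ‖mv (A i) (z - x k i)‖ ^ 2)
    (hlamh : ∀ k, lamh k = lam k - (τ * β) • (sA A (x (k+1)) + sA B (y k) - c))
    (hymin : ∀ k j, y (k+1) j ∈ Y j ∧ ∀ z ∈ Y j,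
      Lag A B c f g β (x (k+1)) (Function.update (y k) j (y (k+1) j)) (lamh k)
          + σ2 * β / 2 * ‖mv (B j) (y (k+1) j - y k j)‖ ^ 2
        ≤ Lag A B c f g β (x (k+1)) (Function.update (y k) j z) (lamh k)
          + σ2 * β / 2 * ‖mv (B j) (z - y k j)‖ ^ 2)
    : ∀ k : ℕ,
      (∀ i, x (k+1) i ∈ X i) ∧ (∀ j, y (k+1) j ∈ Y j) ∧
      (let tl : EuclideanSpace ℝ (Fin n) :=
        lam k - β • (sA A (x (k+1)) + sA B (y k) - c);
      ∀ (xx : ∀ i, EuclideanSpace ℝ (Fin (m i)))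
        (yy : ∀ j, EuclideanSpace ℝ (Fin (d j)))
        (ll : EuclideanSpace ℝ (Fin n)),
        (∀ i, xx i ∈ X i) → (∀ j, yy j ∈ Y j) →
        ((∑ i, f i (xx i)) + (∑ j, g j (yy j))
            - ((∑ i, f i (x (k+1) i)) + (∑ j, g j (y (k+1) j)))
          + (∑ i, ⟪xx i - x (k+1) i,
              -(mv (A i)ᵀ tl)
                + β • ((σ1 + 1) • mv (A i)ᵀ (mv (A i) (x (k+1) i - x k i))
                    - mv (A i)ᵀ (sA A (fun l => x (k+1) l - x k l)))⟫)
          + (∑ j, ⟪yy j - y (k+1) j,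
              -(mv (B j)ᵀ tl)
                + (((σ2 + 1) * β) • mv (B j)ᵀ (mv (B j) (y (k+1) j - y k j))
                    - τ • mv (B j)ᵀ (tl - lam k))⟫)
          + ⟪ll - tl,
              (sA A (x (k+1)) + sA B (y (k+1)) - c)
                + (-(sA B (fun j => y (k+1) j - y k j)) + β⁻¹ • (tl - lam k))⟫) ≥ 0) := by
  intro k
  refine ⟨fun i => (hxmin k i).1, fun j => (hymin k j).1, ?_⟩
  intro tl xx yy ll hxx hyy
  have hx := Finset.sum_nonneg fun i (_ : i ∈ Finset.univ) =>
    gsadmm_x_update_variational_ineq A B c f g β (x k) (x (k+1)) (y k) (lam k) σ1 i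
      ((hf i).subset (Set.subset_univ _) (hXcv i)) (hxmin k i).1 (hxmin k i).2 (hxx i)
  have hy := Finset.sum_nonneg fun j (_ : j ∈ Finset.univ) =>
    gsadmm_y_update_variational_ineq A B c f g β (x (k+1)) (y k) (y (k+1)) (lam k) (lamh k) σ2 τ
      (hlamh k) j ((hg j).subset (Set.subset_univ _) (hYcv j)) (hymin k j).1 (hymin k j).2 (hyy j)
  rw [gsadmm_multiplier_residual_eq_zero A B c β hβ.ne' (x (k+1)) (y k) (y (k+1)) (lam k),
    inner_zero_right]
  simp only [Finset.sum_add_distrib, Finset.sum_sub_distrib] at hx hy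
  linarith

/-- the GS-ADMM prediction step satisfies the variational inequality
`h(u) − h(ũ^k) + ⟨w − w̃^k, J(w̃^k) + Q(w̃^k − w^k)⟩ ≥ 0` for all `w ∈ M`. -/
theorem stmt3
    {p q n : ℕ} (hp : 1 ≤ p) (hq : 1 ≤ q)
    {m : Fin p → ℕ} {d : Fin q → ℕ}
    (A : ∀ i, Matrix (Fin n) (Fin (m i)) ℝ)
    (B : ∀ j, Matrix (Fin n) (Fin (d j)) ℝ)
    (hA : ∀ i, LinearIndependent ℝ (fun l => (A i)ᵀ l))
    (hB : ∀ j, LinearIndependent ℝ (fun l => (B j)ᵀ l))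
    (c : EuclideanSpace ℝ (Fin n))
    (X : ∀ i, Set (EuclideanSpace ℝ (Fin (m i))))
    (Y : ∀ j, Set (EuclideanSpace ℝ (Fin (d j))))
    (hXne : ∀ i, (X i).Nonempty) (hXcl : ∀ i, IsClosed (X i)) (hXcv : ∀ i, Convex ℝ (X i))
    (hYne : ∀ j, (Y j).Nonempty) (hYcl : ∀ j, IsClosed (Y j)) (hYcv : ∀ j, Convex ℝ (Y j))
    (f : ∀ i, EuclideanSpace ℝ (Fin (m i)) → ℝ)
    (g : ∀ j, EuclideanSpace ℝ (Fin (d j)) → ℝ)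
    (hf : ∀ i, ConvexOn ℝ Set.univ (f i))
    (hg : ∀ j, ConvexOn ℝ Set.univ (g j))
    (β σ1 σ2 τ s : ℝ) (hβ : 0 < β)
    (x : ℕ → ∀ i, EuclideanSpace ℝ (Fin (m i)))
    (y : ℕ → ∀ j, EuclideanSpace ℝ (Fin (d j)))
    (lam lamh : ℕ → EuclideanSpace ℝ (Fin n))
    (hxmin : ∀ k i, x (k+1) i ∈ X i ∧ ∀ z ∈ X i,
      Lag A B c f g β (Function.update (x k) i (x (k+1) i)) (y k) (lam k)
          + σ1 * β / 2 * ‖mv (A i) (x (k+1) i - x k i)‖ ^ 2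
        ≤ Lag A B c f g β (Function.update (x k) i z) (y k) (lam k)
          + σ1 * β / 2 * ‖mv (A i) (z - x k i)‖ ^ 2)
    (hlamh : ∀ k, lamh k = lam k - (τ * β) • (sA A (x (k+1)) + sA B (y k) - c))
    (hymin : ∀ k j, y (k+1) j ∈ Y j ∧ ∀ z ∈ Y j,
      Lag A B c f g β (x (k+1)) (Function.update (y k) j (y (k+1) j)) (lamh k)
          + σ2 * β / 2 * ‖mv (B j) (y (k+1) j - y k j)‖ ^ 2
        ≤ Lag A B c f g β (x (k+1)) (Function.update (y k) j z) (lamh k)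
          + σ2 * β / 2 * ‖mv (B j) (z - y k j)‖ ^ 2)
    (hlam : ∀ k, lam (k+1) = lamh k - (s * β) • (sA A (x (k+1)) + sA B (y (k+1)) - c))
    : ∀ k : ℕ,
      (∀ i, x (k+1) i ∈ X i) ∧ (∀ j, y (k+1) j ∈ Y j) ∧
      (let tl : EuclideanSpace ℝ (Fin n) :=
        lam k - β • (sA A (x (k+1)) + sA B (y k) - c);
      ∀ (xx : ∀ i, EuclideanSpace ℝ (Fin (m i)))
        (yy : ∀ j, EuclideanSpace ℝ (Fin (d j)))
        (ll : EuclideanSpace ℝ (Fin n)),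
        (∀ i, xx i ∈ X i) → (∀ j, yy j ∈ Y j) →
        ((∑ i, f i (xx i)) + (∑ j, g j (yy j))
            - ((∑ i, f i (x (k+1) i)) + (∑ j, g j (y (k+1) j)))
          + (∑ i, ⟪xx i - x (k+1) i,
              -(mv (A i)ᵀ tl)
                + β • ((σ1 + 1) • mv (A i)ᵀ (mv (A i) (x (k+1) i - x k i))
                    - mv (A i)ᵀ (sA A (fun l => x (k+1) l - x k l)))⟫)
          + (∑ j, ⟪yy j - y (k+1) j,
              -(mv (B j)ᵀ tl)
                + (((σ2 + 1) * β) • mv (B j)ᵀ (mv (B j) (y (k+1) j - y k j))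
                    - τ • mv (B j)ᵀ (tl - lam k))⟫)
          + ⟪ll - tl,
              (sA A (x (k+1)) + sA B (y (k+1)) - c)
                + (-(sA B (fun j => y (k+1) j - y k j)) + β⁻¹ • (tl - lam k))⟫) ≥ 0) :=
  stmt3_general A B c X Y hXcv hYcv f g hf hg β σ1 σ2 τ hβ x y lam lamh hxmin hlamh hymin
end

section
/- Suppose β > 0, σ_1 > p − 1, σ_2 > q − 1, τ ≤ 1 and τ + s > 0, and suppose each A_i ∈ ℝ^{n×m_i} and each B_j ∈ ℝ^{n×d_j} has full column rank. Then the quadratic form ‖(x,y,λ)‖_H² = β[(σ_1+1)Σ_{i=1}^p‖A_i x_i‖² − ‖Σ_{i=1}^p A_i x_i‖²] + (σ_2+1)β Σ_{j=1}^q‖B_j y_j‖² − (τs/(τ+s))β‖Σ_{j=1}^q B_j y_j‖² − (2τ/(τ+s))⟨Σ_{j=1}^q B_j y_j, λ⟩ + (1/(β(τ+s)))‖λ‖² is positive definite on ℝ^{m_1}×⋯×ℝ^{m_p}×ℝ^{d_1}×⋯×ℝ^{d_q}×ℝ^n, i.e., ‖(x,y,λ)‖_H² > 0 whenever (x,y,λ)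 ≠ 0. -/
open scoped RealInnerProductSpace
open Matrix Filter

/-- The `H`-quadratic form `‖(x,y,λ)‖_H²`. -/
noncomputable def Hform {p q n : ℕ} {m : Fin p → ℕ} {d : Fin q → ℕ}
    (A : ∀ i, Matrix (Fin n) (Fin (m i)) ℝ)
    (B : ∀ j, Matrix (Fin n) (Fin (d j)) ℝ)
    (β σ1 σ2 τ s : ℝ)
    (x : ∀ i, EuclideanSpace ℝ (Fin (m i)))
    (y : ∀ j, EuclideanSpace ℝ (Fin (d j)))
    (lam : EuclideanSpace ℝ (Fin n)) : ℝ :=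
  β * ((σ1 + 1) * (∑ i, ‖mv (A i) (x i)‖ ^ 2) - ‖sA A x‖ ^ 2)
    + (σ2 + 1) * β * (∑ j, ‖mv (B j) (y j)‖ ^ 2)
    - τ * s / (τ + s) * β * ‖sA B y‖ ^ 2
    - 2 * τ / (τ + s) * ⟪sA B y, lam⟫
    + 1 / (β * (τ + s)) * ‖lam‖ ^ 2

/-- The `G`-quadratic form `‖(x,y,λ)‖_G²`. -/
noncomputable def Gform {p q n : ℕ} {m : Fin p → ℕ} {d : Fin q → ℕ}
    (A : ∀ i, Matrix (Fin n) (Fin (m i)) ℝ)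
    (B : ∀ j, Matrix (Fin n) (Fin (d j)) ℝ)
    (β σ1 σ2 τ s : ℝ)
    (x : ∀ i, EuclideanSpace ℝ (Fin (m i)))
    (y : ∀ j, EuclideanSpace ℝ (Fin (d j)))
    (lam : EuclideanSpace ℝ (Fin n)) : ℝ :=
  β * ((σ1 + 1) * (∑ i, ‖mv (A i) (x i)‖ ^ 2) - ‖sA A x‖ ^ 2)
    + (σ2 + 1) * β * (∑ j, ‖mv (B j) (y j)‖ ^ 2)
    - s * β * ‖sA B y‖ ^ 2
    + 2 * (s - 1) * ⟪sA B y, lam⟫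
    + (2 - τ - s) / β * ‖lam‖ ^ 2

/-- The `H_y`-quadratic form `‖y‖_{H_y}² = β[(σ₂+1)Σ_j‖B_j y_j‖² − ‖By‖²]`. -/
noncomputable def Hyform {q n : ℕ} {d : Fin q → ℕ}
    (B : ∀ j, Matrix (Fin n) (Fin (d j)) ℝ)
    (β σ2 : ℝ)
    (y : ∀ j, EuclideanSpace ℝ (Fin (d j))) : ℝ :=
  β * ((σ2 + 1) * (∑ j, ‖mv (B j) (y j)‖ ^ 2) - ‖sA B y‖ ^ 2)

/-!
Completing the square in `λ` rewrites `‖(x,y,λ)‖_H²` as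
  `β[(σ₁+1)Σ‖A_i x_i‖² − ‖Ax‖²] + β[(σ₂+1)Σ‖B_j y_j‖² − τ‖By‖²] + ‖λ − τβ By‖²/(β(τ+s))`,
the coefficient of `‖By‖²` becoming `τs/(τ+s) + τ²/(τ+s) = τ`. Since `‖Σ_{i≤p} v_i‖² ≤ p Σ‖v_i‖²`
and `τ ≤ 1`, the first two brackets are nonnegative, and positive when `x ≠ 0`, resp. `y ≠ 0`,
because each `A_i`, `B_j` is injective. When `x = y = 0` the last term is `‖λ‖²/(β(τ+s)) > 0`.
-/

open Finset

theorem mv_eq_zero_iff {n m : ℕ} {M : Matrix (Fin n) (Fin m) ℝ}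
    (hM : LinearIndependent ℝ (fun l => Mᵀ l)) {v : EuclideanSpace ℝ (Fin m)} :
    mv M v = 0 ↔ v = 0 := by
  refine ⟨fun h => ?_, fun h => by simp [h, mv]⟩
  have : M *ᵥ v = M *ᵥ (0 : EuclideanSpace ℝ (Fin m)) := by
    simpa [mv] using congrArg WithLp.ofLp h
  exact WithLp.ofLp_injective 2 (Matrix.mulVec_injective_iff.2 hM this)

theorem sA_zero {p n : ℕ} {m : Fin p → ℕ} (A : ∀ i, Matrix (Fin n) (Fin (m i)) ℝ) :
    sA A 0 = 0 := by
  simp [sA, mv]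

theorem norm_sum_sq_le_card_mul {ι E : Type*} [SeminormedAddCommGroup E]
    (s : Finset ι) (v : ι → E) : ‖∑ i ∈ s, v i‖ ^ 2 ≤ #s * ∑ i ∈ s, ‖v i‖ ^ 2 :=
  (pow_le_pow_left₀ (norm_nonneg _) (norm_sum_le _ _) 2).trans (sq_sum_le_card_mul_sum_sq ..)

theorem norm_sum_sq_le_mul_sum_norm_sq {ι E : Type*} [Fintype ι] [SeminormedAddCommGroup E]
    {c : ℝ} (hc : Fintype.card ι ≤ c) (v : ι → E) :
    ‖∑ i, v i‖ ^ 2 ≤ c * ∑ i, ‖v i‖ ^ 2 :=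
  (norm_sum_sq_le_card_mul _ v).trans <| by gcongr; exact hc

theorem norm_sum_sq_lt_mul_sum_norm_sq {ι E : Type*} [Fintype ι] [NormedAddCommGroup E]
    {c : ℝ} (hc : Fintype.card ι < c) {v : ι → E} (hv : v ≠ 0) :
    ‖∑ i, v i‖ ^ 2 < c * ∑ i, ‖v i‖ ^ 2 := by
  obtain ⟨i, hi⟩ := Function.ne_iff.1 hv
  have hpos : 0 < ∑ i, ‖v i‖ ^ 2 :=
    sum_pos' (fun j _ => by positivity) ⟨i, mem_univ i, pow_pos (norm_pos_iff.2 hi) 2⟩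
  calc ‖∑ i, v i‖ ^ 2 ≤ Fintype.card ι * ∑ i, ‖v i‖ ^ 2 := norm_sum_sq_le_card_mul _ v
    _ < c * ∑ i, ‖v i‖ ^ 2 := by gcongr

section Blocks

variable {p n : ℕ} {m : Fin p → ℕ} (A : ∀ i, Matrix (Fin n) (Fin (m i)) ℝ)
  (x : ∀ i, EuclideanSpace ℝ (Fin (m i))) {c : ℝ}

theorem norm_sA_sq_le (hc : (p : ℝ) ≤ c) :
    ‖sA A x‖ ^ 2 ≤ c * ∑ i, ‖mv (A i) (x i)‖ ^ 2 :=
  norm_sum_sq_le_mul_sum_norm_sq (by simpa using hc) _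

variable {A x}

theorem norm_sA_sq_lt (hA : ∀ i, LinearIndependent ℝ (fun l => (A i)ᵀ l))
    (hc : (p : ℝ) < c) (hx : x ≠ 0) :
    ‖sA A x‖ ^ 2 < c * ∑ i, ‖mv (A i) (x i)‖ ^ 2 := by
  obtain ⟨i, hi⟩ := Function.ne_iff.1 hx
  refine norm_sum_sq_lt_mul_sum_norm_sq (by simpa using hc) (Function.ne_iff.2 ⟨i, ?_⟩)
  simpa using (mv_eq_zero_iff (hA i)).not.2 hi

end Blocks

theorem Hform_eq_complete_square {p q n : ℕ} {m : Fin p → ℕ} {d : Fin q → ℕ}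
    (A : ∀ i, Matrix (Fin n) (Fin (m i)) ℝ) (B : ∀ j, Matrix (Fin n) (Fin (d j)) ℝ)
    {β τ s : ℝ} (σ1 σ2 : ℝ) (hβ : β ≠ 0) (hτs : τ + s ≠ 0)
    (x : ∀ i, EuclideanSpace ℝ (Fin (m i))) (y : ∀ j, EuclideanSpace ℝ (Fin (d j)))
    (lam : EuclideanSpace ℝ (Fin n)) :
    Hform A B β σ1 σ2 τ s x y lam =
      β * ((σ1 + 1) * ∑ i, ‖mv (A i) (x i)‖ ^ 2 - ‖sA A x‖ ^ 2)
      + β * ((σ2 + 1) * ∑ j, ‖mv (B j) (y j)‖ ^ 2 - τ * ‖sA B y‖ ^ 2)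
      + ‖lam - (τ * β) • sA B y‖ ^ 2 / (β * (τ + s)) := by
  rw [Hform, norm_sub_sq_real, norm_smul, real_inner_smul_right, mul_pow, Real.norm_eq_abs,
    sq_abs, real_inner_comm]
  field_simp
  ring

theorem stmt4_general {p q n : ℕ}
    {m : Fin p → ℕ} {d : Fin q → ℕ}
    (A : ∀ i, Matrix (Fin n) (Fin (m i)) ℝ)
    (B : ∀ j, Matrix (Fin n) (Fin (d j)) ℝ)
    (hA : ∀ i, LinearIndependent ℝ (fun l => (A i)ᵀ l))
    (hB : ∀ j, LinearIndependent ℝ (fun l => (B j)ᵀ l))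
    (β σ1 σ2 τ s : ℝ) (hβ : 0 < β)
    (hσ1 : (p : ℝ) - 1 < σ1) (hσ2 : (q : ℝ) - 1 < σ2)
    (hτ : τ ≤ 1) (hτs : 0 < τ + s)
    (x : ∀ i, EuclideanSpace ℝ (Fin (m i)))
    (y : ∀ j, EuclideanSpace ℝ (Fin (d j)))
    (lam : EuclideanSpace ℝ (Fin n))
    (hne : ¬(x = 0 ∧ y = 0 ∧ lam = 0)) :
    0 < Hform A B β σ1 σ2 τ s x y lam := by
  rw [Hform_eq_complete_square A B σ1 σ2 hβ.ne' hτs.ne']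
  have hp : (p : ℝ) < σ1 + 1 := by linarith
  have hq : (q : ℝ) < σ2 + 1 := by linarith
  have hτB : τ * ‖sA B y‖ ^ 2 ≤ ‖sA B y‖ ^ 2 := mul_le_of_le_one_left (sq_nonneg _) hτ
  have hx_part := mul_nonneg hβ.le (sub_nonneg.2 (norm_sA_sq_le A x hp.le))
  have hy_part := mul_nonneg hβ.le (sub_nonneg.2 (hτB.trans (norm_sA_sq_le B y hq.le)))
  have hlam_part : 0 ≤ ‖lam - (τ * β) • sA B y‖ ^ 2 / (β * (τ + s)) := by positivity
  by_cases hx : x = 0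
  · by_cases hy : y = 0
    · have hlam : lam ≠ 0 := fun h => hne ⟨hx, hy, h⟩
      subst hx hy
      simpa [sA_zero, mv] using (by positivity : 0 < ‖lam‖ ^ 2 / (β * (τ + s)))
    · linarith [mul_pos hβ (sub_pos.2 (hτB.trans_lt (norm_sA_sq_lt hB hq hy)))]
  · linarith [mul_pos hβ (sub_pos.2 (norm_sA_sq_lt hA hp hx))]

/-- positive definiteness of the `H`-quadratic form when `β > 0`,
`σ₁ > p−1`, `σ₂ > q−1`, `τ ≤ 1`, `τ + s > 0`, and all `A_i`, `B_j` have full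
column rank. -/
theorem stmt4 {p q n : ℕ} (hp : 1 ≤ p) (hq : 1 ≤ q)
    {m : Fin p → ℕ} {d : Fin q → ℕ}
    (A : ∀ i, Matrix (Fin n) (Fin (m i)) ℝ)
    (B : ∀ j, Matrix (Fin n) (Fin (d j)) ℝ)
    (hA : ∀ i, LinearIndependent ℝ (fun l => (A i)ᵀ l))
    (hB : ∀ j, LinearIndependent ℝ (fun l => (B j)ᵀ l))
    (β σ1 σ2 τ s : ℝ) (hβ : 0 < β)
    (hσ1 : (p : ℝ) - 1 < σ1) (hσ2 : (q : ℝ) - 1 < σ2)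
    (hτ : τ ≤ 1) (hτs : 0 < τ + s)
    (x : ∀ i, EuclideanSpace ℝ (Fin (m i)))
    (y : ∀ j, EuclideanSpace ℝ (Fin (d j)))
    (lam : EuclideanSpace ℝ (Fin n))
    (hne : ¬(x = 0 ∧ y = 0 ∧ lam = 0)) :
    0 < Hform A B β σ1 σ2 τ s x y lam :=
  stmt4_general A B hA hB β σ1 σ2 τ s hβ hσ1 hσ2 hτ hτs x y lam hne
end
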